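/- arXiv:2406.04315 — 2 statements merged into one kernel-verified Lean document; each statement's English description precedes it below -/
import Mathlib

section
/- Consider the Hamiltonian H(x,u,ξ,μ) = |ξ + J_μ x/2|²/2 on ℝ^{d₁}×ℝ^{d₂}×ℝ^{d₁}×ℝ^{d₂}, where J_μ is skew-symmetric for each μ and linear in μ, and μ·[x,x'] = ⟨J_μ x, x'⟩. Then the solution of Hamilton's equations ẋ = ∇_ξ H, u̇ = ∇_μ H, ξ̇ = -∇_x H, μ̇ = -∇_u H with initial condition (x,u,ξ,μ)(0) = (0,0,ξ₀,μ₀) satisfies: μ(t) = μ₀, x(t) = ((exp(tJ_{μ₀}) - I)/J_{μ₀}) ξ₀, ξ(t) = (1/2)(I + exp(tJ_{μ₀})) ξ₀, and u(t) = (1/2)∫₀ᵗ [((exp(τJ_{μ₀})-I)/J_{μ₀}) ξ₀, exp(τJ_{μ₀}) ξ₀] dτ. -/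
open Matrix Function

/-- The entire matrix function `(exp (t A) - I)/A = ∑_{k ≥ 1} t^k A^(k-1)/k!`,
well defined even for singular `A`. -/
noncomputable def expmOneDiv {n : ℕ} (t : ℝ) (A : Matrix (Fin n) (Fin n) ℝ) :
    Matrix (Fin n) (Fin n) ℝ :=
  ∑' k : ℕ, (t ^ (k + 1) / (k + 1).factorial : ℝ) • A ^ k

/-- The matrix exponential `exp (t A)`, via its power series. -/
noncomputable def matExp {n : ℕ} (t : ℝ) (A : Matrix (Fin n) (Fin n) ℝ) :
    Matrix (Fin n) (Fin n) ℝ :=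
  ∑' k : ℕ, (t ^ k / k.factorial : ℝ) • A ^ k

/-- The second-layer bracket `[x, y] ∈ ℝ^{d₂}` determined by the linear family of
matrices `J`, via `μ · [x, y] = ⟨J μ x, y⟩`, i.e. `[x,y]ⱼ = ⟨J eⱼ x, y⟩`. -/
noncomputable def bracket {d₁ d₂ : ℕ} (J : (Fin d₂ → ℝ) →ₗ[ℝ] Matrix (Fin d₁) (Fin d₁) ℝ)
    (x y : Fin d₁ → ℝ) : Fin d₂ → ℝ :=
  fun j => (J (Pi.single j 1)).mulVec x ⬝ᵥ y

/-- The Hamiltonian `𝒜(x, u, ξ, μ) = |ξ + J_μ x / 2|² / 2` (half the principal symbol of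
the sub-Laplacian); it is independent of `u`, but `u` is kept as a formal argument. -/
noncomputable def quadHam {d₁ d₂ : ℕ} (J : (Fin d₂ → ℝ) →ₗ[ℝ] Matrix (Fin d₁) (Fin d₁) ℝ)
    (x : Fin d₁ → ℝ) (_u : Fin d₂ → ℝ) (ξ : Fin d₁ → ℝ) (μ : Fin d₂ → ℝ) : ℝ :=
  (1 / 2 : ℝ) * ((ξ + (1 / 2 : ℝ) • (J μ).mulVec x) ⬝ᵥ (ξ + (1 / 2 : ℝ) • (J μ).mulVec x))

/-!
Along the flow, `ζ = ξ + J_μ x / 2` is the velocity `ẋ`, and since `J_μ` is skew-symmetric,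
`ξ̇ = J_μ ζ / 2`; hence `ζ̇ = J_μ ζ` while `μ` stays constant, and `ζ(t) = exp(tJ) ξ₀`.
Then `x`, `ξ = ζ - J x / 2` and `u` are obtained by integrating. All that is needed about
`(exp(tJ) - I)/J` is that it is a primitive of `exp(tJ)` vanishing at `0` and that
`J · (exp(tJ) - I)/J = exp(tJ) - I`; both follow termwise from the power series, in any
Banach algebra.
-/

open NormedSpace Nat

section PowerSeries

variable {𝔸 : Type*} [NormedRing 𝔸] [NormedAlgebra ℝ 𝔸]

theorem tsum_pow_div_factorial_smul_eq_exp (a : 𝔸) (t : ℝ) :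
    ∑' k : ℕ, (t ^ k / k ! : ℝ) • a ^ k = exp (t • a) := by
  rw [exp_eq_tsum ℝ]
  refine tsum_congr fun k => ?_
  rw [smul_pow, smul_smul, div_eq_inv_mul]

theorem norm_pow_succ_div_factorial_smul_le (a : 𝔸) (t : ℝ) (k : ℕ) :
    ‖(t ^ (k + 1) / (k + 1)! : ℝ) • a ^ k‖ ≤ |t| * ‖(k !⁻¹ : ℝ) • (t • a) ^ k‖ := by
  rw [smul_pow, smul_smul, norm_smul, norm_smul, ← mul_assoc]
  gcongr
  simp only [norm_div, norm_mul, norm_inv, norm_pow, Real.norm_eq_abs, Nat.abs_cast]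
  rw [pow_succ, mul_comm, mul_div_assoc, inv_mul_eq_div]
  gcongr
  exact Nat.le_succ k

variable [CompleteSpace 𝔸]

theorem summable_pow_succ_div_factorial_smul (a : 𝔸) (t : ℝ) :
    Summable fun k : ℕ => (t ^ (k + 1) / (k + 1)! : ℝ) • a ^ k :=
  .of_norm_bounded ((norm_expSeries_summable' (t • a)).mul_left |t|)
    (norm_pow_succ_div_factorial_smul_le a t)

theorem mul_tsum_pow_succ_div_factorial_smul (a : 𝔸) (t : ℝ) :
    a * ∑' k : ℕ, (t ^ (k + 1) / (k + 1)! : ℝ) • a ^ k = exp (t • a) - 1 := by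
  rw [← (summable_pow_succ_div_factorial_smul a t).tsum_mul_left, exp_eq_tsum ℝ]
  beta_reduce
  rw [(expSeries_summable' (𝕂 := ℝ) (t • a)).tsum_eq_zero_add]
  simp only [pow_zero, factorial_zero, cast_one, inv_one, one_smul, add_sub_cancel_left]
  refine tsum_congr fun k => ?_
  rw [mul_smul_comm, ← _root_.pow_succ', smul_pow, smul_smul, div_eq_inv_mul]

theorem hasDerivAt_tsum_pow_succ_div_factorial_smul (a : 𝔸) (t : ℝ) :
    HasDerivAt (fun s => ∑' k : ℕ, (s ^ (k + 1) / (k + 1)! : ℝ) • a ^ k) (exp (t • a)) t := by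
  set R := |t| + 1
  rw [← tsum_pow_div_factorial_smul_eq_exp]
  -- differentiate termwise, the derivatives being dominated on the ball of radius `R`
  refine hasDerivAt_tsum_of_isPreconnected (F := 𝔸)
    (g := fun k s => (s ^ (k + 1) / (k + 1)! : ℝ) • a ^ k)
    (g' := fun k s => (s ^ k / k ! : ℝ) • a ^ k) (u := fun k => R ^ k / k ! * ‖a ^ k‖)
    (y₀ := 0) ?_ Metric.isOpen_ball (convex_ball (0 : ℝ) R).isPreconnected (fun k s _ => ?_)
    (fun k s hs => ?_) (Metric.mem_ball_self (by positivity)) ?_ ?_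
  · refine (norm_expSeries_summable' (𝕂 := ℝ) (R • a)).congr fun k => ?_
    rw [smul_pow, smul_smul, norm_smul, Real.norm_eq_abs, abs_of_nonneg (by positivity),
      div_eq_inv_mul]
  · convert ((hasDerivAt_pow (k + 1) s).div_const ((k + 1)! : ℝ)).smul_const (a ^ k) using 2
    rw [Nat.factorial_succ]
    push_cast
    field_simp
  · rw [norm_smul, norm_div, norm_pow, Real.norm_eq_abs, Real.norm_natCast]
    gcongr
    exact (mem_ball_zero_iff.1 hs).le
  · simp
  · exact mem_ball_zero_iff.2 (by simp [R])

end PowerSeries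

section MatrixSeries

-- The `ℓ∞` operator norm induces the product topology, in which the `tsum`s defining
-- `matExp` and `expmOneDiv` are taken.
attribute [local instance] Matrix.linftyOpNormedRing Matrix.linftyOpNormedAlgebra

variable {n : ℕ} (A : Matrix (Fin n) (Fin n) ℝ)

theorem matExp_eq_exp (t : ℝ) : matExp t A = exp (t • A) :=
  tsum_pow_div_factorial_smul_eq_exp A t

theorem mul_expmOneDiv (t : ℝ) : A * expmOneDiv t A = matExp t A - 1 := by
  rw [matExp_eq_exp]
  exact mul_tsum_pow_succ_div_factorial_smul A t

theorem matExp_zero : matExp 0 A = 1 := by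
  rw [matExp_eq_exp, zero_smul, exp_zero]

theorem expmOneDiv_zero : expmOneDiv 0 A = 0 := by
  simp [expmOneDiv]

theorem HasDerivAt.mulVec_const {M : ℝ → Matrix (Fin n) (Fin n) ℝ}
    {M' : Matrix (Fin n) (Fin n) ℝ} {t : ℝ} (h : HasDerivAt M M' t) (v : Fin n → ℝ) :
    HasDerivAt (fun s => M s *ᵥ v) (M' *ᵥ v) t := by
  let L : Matrix (Fin n) (Fin n) ℝ →L[ℝ] Fin n → ℝ :=
    LinearMap.toContinuousLinearMap (LinearMap.applyₗ v ∘ₗ Matrix.toLin'.toLinearMap)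
  exact L.hasFDerivAt.comp_hasDerivAt t h

theorem hasDerivAt_expmOneDiv_mulVec (v : Fin n → ℝ) (t : ℝ) :
    HasDerivAt (fun s => expmOneDiv s A *ᵥ v) (matExp t A *ᵥ v) t := by
  rw [matExp_eq_exp]
  exact (hasDerivAt_tsum_pow_succ_div_factorial_smul A t).mulVec_const v

theorem hasDerivAt_matExp_mulVec (v : Fin n → ℝ) (t : ℝ) :
    HasDerivAt (fun s => matExp s A *ᵥ v) (A *ᵥ (matExp t A *ᵥ v)) t := by
  simp_rw [matExp_eq_exp, mulVec_mulVec]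
  exact (hasDerivAt_exp_smul_const' A t).mulVec_const v

theorem continuous_expmOneDiv_mulVec (v : Fin n → ℝ) : Continuous fun s => expmOneDiv s A *ᵥ v :=
  continuous_iff_continuousAt.2 fun t => (hasDerivAt_expmOneDiv_mulVec A v t).continuousAt

theorem continuous_matExp_mulVec (v : Fin n → ℝ) : Continuous fun s => matExp s A *ᵥ v :=
  continuous_iff_continuousAt.2 fun t => (hasDerivAt_matExp_mulVec A v t).continuousAt

end MatrixSeries

theorem HasDerivAt.const_mulVec {n : ℕ} (A : Matrix (Fin n) (Fin n) ℝ) {z : ℝ → Fin n → ℝ}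
    {z' : Fin n → ℝ} {t : ℝ} (hz : HasDerivAt z z' t) :
    HasDerivAt (fun s => A *ᵥ z s) (A *ᵥ z') t :=
  (LinearMap.toContinuousLinearMap (Matrix.mulVecLin A)).hasFDerivAt.comp_hasDerivAt t hz

theorem eq_matExp_mulVec_of_hasDerivAt {n : ℕ} {A : Matrix (Fin n) (Fin n) ℝ}
    {z : ℝ → Fin n → ℝ} (hz : ∀ t, HasDerivAt z (A *ᵥ z t) t) (t : ℝ) :
    z t = matExp t A *ᵥ z 0 := by
  have hA := (LinearMap.toContinuousLinearMap (Matrix.mulVecLin A)).lipschitz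
  refine congrFun (ODE_solution_unique_univ (v := fun _ w => A *ᵥ w) (s := fun _ => Set.univ)
    (t₀ := 0) (fun _ => hA.lipschitzOnWith) (fun t => ⟨hz t, trivial⟩)
    (fun t => ⟨hasDerivAt_matExp_mulVec A _ t, trivial⟩) ?_) t
  rw [matExp_zero, one_mulVec]

theorem eq_of_hasDerivAt_eq {E : Type*} [NormedAddCommGroup E] [NormedSpace ℝ E]
    {f g f' : ℝ → E} (hf : ∀ t, HasDerivAt f (f' t) t) (hg : ∀ t, HasDerivAt g (f' t) t)
    (h₀ : f 0 = g 0) : f = g :=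
  eq_of_fderiv_eq (fun t => (hf t).differentiableAt) (fun t => (hg t).differentiableAt)
    (fun t => by rw [(hf t).hasFDerivAt.fderiv, (hg t).hasFDerivAt.fderiv]) 0 h₀

theorem eq_expmOneDiv_mulVec_of_hasDerivAt {n : ℕ} {A : Matrix (Fin n) (Fin n) ℝ}
    {v : Fin n → ℝ} {x : ℝ → Fin n → ℝ} (hx : ∀ t, HasDerivAt x (matExp t A *ᵥ v) t)
    (hx0 : x 0 = 0) (t : ℝ) : x t = expmOneDiv t A *ᵥ v :=
  congrFun (eq_of_hasDerivAt_eq hx (hasDerivAt_expmOneDiv_mulVec A v)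
    (by rw [hx0, expmOneDiv_zero, zero_mulVec])) t

theorem eq_intervalIntegral_of_hasDerivAt {E : Type*} [NormedAddCommGroup E] [NormedSpace ℝ E]
    [CompleteSpace E] {f f' : ℝ → E} (hf : ∀ t, HasDerivAt f (f' t) t) (hf' : Continuous f')
    (hf0 : f 0 = 0) (t : ℝ) : f t = ∫ τ in (0 : ℝ)..t, f' τ := by
  rw [intervalIntegral.integral_eq_sub_of_hasDerivAt (fun τ _ => hf τ)
    (hf'.intervalIntegrable _ _), hf0, sub_zero]

theorem update_eq_add_smul_single {ι R : Type*} [DecidableEq ι] [Ring R] (v : ι → R) (i : ι)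
    (a : R) : update v i a = v + (a - v i) • Pi.single i 1 := by
  rw [Pi.update_eq_sub_add_single, ← Pi.single_smul, smul_eq_mul, mul_one, Pi.single_sub]
  abel

theorem hasDerivAt_half_dotProduct_self_add_smul {ι : Type*} [Fintype ι] (w v : ι → ℝ)
    (a₀ : ℝ) :
    HasDerivAt (fun a => (1 / 2 : ℝ) * ((w + (a - a₀) • v) ⬝ᵥ (w + (a - a₀) • v)))
      (w ⬝ᵥ v) a₀ := by
  have hexpand : ∀ a : ℝ, (1 / 2 : ℝ) * ((w + (a - a₀) • v) ⬝ᵥ (w + (a - a₀) • v)) =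
      1 / 2 * (w ⬝ᵥ w) + ((a - a₀) * (w ⬝ᵥ v) + 1 / 2 * (a - a₀) ^ 2 * (v ⬝ᵥ v)) := by
    intro a
    simp only [add_dotProduct, dotProduct_add, smul_dotProduct, dotProduct_smul, smul_eq_mul,
      dotProduct_comm v w]
    ring
  have hlin : HasDerivAt (fun a : ℝ => a - a₀) 1 a₀ := (hasDerivAt_id' a₀).sub_const a₀
  simp_rw [hexpand]
  simpa using ((hlin.mul_const (w ⬝ᵥ v)).add
    (((hlin.pow 2).const_mul (1 / 2 : ℝ)).mul_const (v ⬝ᵥ v))).const_add (1 / 2 * (w ⬝ᵥ w))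

section Hamiltonian

variable {d₁ d₂ : ℕ} (J : (Fin d₂ → ℝ) →ₗ[ℝ] Matrix (Fin d₁) (Fin d₁) ℝ)

noncomputable def horizontalSymbol (x ξ : Fin d₁ → ℝ) (μ : Fin d₂ → ℝ) : Fin d₁ → ℝ :=
  ξ + (1 / 2 : ℝ) • J μ *ᵥ x

theorem HasDerivAt.horizontalSymbol {x ξ : ℝ → Fin d₁ → ℝ} {x' ξ' : Fin d₁ → ℝ} {t : ℝ}
    (hx : HasDerivAt x x' t) (hξ : HasDerivAt ξ ξ' t) (μ : Fin d₂ → ℝ) :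
    HasDerivAt (fun s => horizontalSymbol J (x s) (ξ s) μ) (ξ' + (1 / 2 : ℝ) • J μ *ᵥ x') t :=
  hξ.add ((hx.const_mulVec (J μ)).const_smul (1 / 2 : ℝ))

theorem continuous_bracket {f g : ℝ → Fin d₁ → ℝ} (hf : Continuous f) (hg : Continuous g) :
    Continuous fun s => bracket J (f s) (g s) :=
  continuous_pi fun _ => (continuous_const.matrix_mulVec hf).dotProduct hg

variable (x : Fin d₁ → ℝ) (u : Fin d₂ → ℝ) (ξ : Fin d₁ → ℝ) (μ : Fin d₂ → ℝ)

theorem deriv_quadHam_update_ξ (i : Fin d₁) :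
    deriv (fun a => quadHam J x u (update ξ i a) μ) (ξ i) = horizontalSymbol J x ξ μ i := by
  have h : (fun a => quadHam J x u (update ξ i a) μ) = fun a => (1 / 2 : ℝ) *
      ((horizontalSymbol J x ξ μ + (a - ξ i) • Pi.single i 1) ⬝ᵥ
        (horizontalSymbol J x ξ μ + (a - ξ i) • Pi.single i 1)) := by
    funext a
    rw [quadHam, update_eq_add_smul_single, horizontalSymbol, add_right_comm]
  rw [h, (hasDerivAt_half_dotProduct_self_add_smul _ _ _).deriv, dotProduct_single_one]

theorem deriv_quadHam_update_x (hskew : (J μ)ᵀ = -J μ) (i : Fin d₁) :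
    deriv (fun a => quadHam J (update x i a) u ξ μ) (x i) =
      -((1 / 2 : ℝ) • J μ *ᵥ horizontalSymbol J x ξ μ) i := by
  have h : (fun a => quadHam J (update x i a) u ξ μ) = fun a => (1 / 2 : ℝ) *
      ((horizontalSymbol J x ξ μ + (a - x i) • ((1 / 2 : ℝ) • J μ *ᵥ Pi.single i 1)) ⬝ᵥ
        (horizontalSymbol J x ξ μ + (a - x i) • ((1 / 2 : ℝ) • J μ *ᵥ Pi.single i 1))) := by
    funext a
    rw [quadHam, update_eq_add_smul_single, horizontalSymbol, mulVec_add, mulVec_smul]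
    congr 2 <;> module
  rw [h, (hasDerivAt_half_dotProduct_self_add_smul _ _ _).deriv, dotProduct_smul,
    dotProduct_mulVec, ← mulVec_transpose, hskew, dotProduct_single_one, neg_mulVec]
  simp

theorem deriv_quadHam_update_μ (j : Fin d₂) :
    deriv (fun a => quadHam J x u ξ (update μ j a)) (μ j) =
      ((1 / 2 : ℝ) • bracket J x (horizontalSymbol J x ξ μ)) j := by
  have h : (fun a => quadHam J x u ξ (update μ j a)) = fun a => (1 / 2 : ℝ) *
      ((horizontalSymbol J x ξ μ + (a - μ j) • ((1 / 2 : ℝ) • J (Pi.single j 1) *ᵥ x)) ⬝ᵥ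
        (horizontalSymbol J x ξ μ + (a - μ j) • ((1 / 2 : ℝ) • J (Pi.single j 1) *ᵥ x))) := by
    funext a
    rw [quadHam, update_eq_add_smul_single, horizontalSymbol, map_add, map_smul, add_mulVec,
      smul_mulVec]
    congr 2 <;> module
  rw [h, (hasDerivAt_half_dotProduct_self_add_smul _ _ _).deriv, Pi.smul_apply, bracket,
    dotProduct_comm, smul_dotProduct]

theorem deriv_quadHam_update_u (j : Fin d₂) :
    deriv (fun a => quadHam J x (update u j a) ξ μ) (u j) = 0 :=
  deriv_const _ _

end Hamiltonian

/-- Consider the Hamiltonian `𝒜(x,u,ξ,μ) = |ξ + J_μ x/2|²/2` on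
`ℝ^{d₁} × ℝ^{d₂} × ℝ^{d₁} × ℝ^{d₂}`, where `J μ` is skew-symmetric and linear in `μ`,
and `μ · [x,x'] = ⟨J_μ x, x'⟩`.  Any solution `(x, u, ξ, μ)` of Hamilton's equations
`ẋ = ∇_ξ 𝒜`, `u̇ = ∇_μ 𝒜`, `ξ̇ = -∇_x 𝒜`, `μ̇ = -∇_u 𝒜` (written coordinatewise via
partial derivatives) with initial condition `(0, 0, ξ₀, μ₀)` satisfies
`μ(t) = μ₀`, `x(t) = ((exp(tJ_{μ₀}) - I)/J_{μ₀}) ξ₀`,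
`ξ(t) = ½ (I + exp(tJ_{μ₀})) ξ₀`, and
`u(t) = ½ ∫₀ᵗ [((exp(τJ_{μ₀}) - I)/J_{μ₀}) ξ₀, exp(τJ_{μ₀}) ξ₀] dτ`. -/
theorem statement8 {d₁ d₂ : ℕ}
    (J : (Fin d₂ → ℝ) →ₗ[ℝ] Matrix (Fin d₁) (Fin d₁) ℝ)
    (hskew : ∀ μ, (J μ)ᵀ = -(J μ))
    (x : ℝ → Fin d₁ → ℝ) (u : ℝ → Fin d₂ → ℝ)
    (ξ : ℝ → Fin d₁ → ℝ) (μ : ℝ → Fin d₂ → ℝ)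
    (ξ₀ : Fin d₁ → ℝ) (μ₀ : Fin d₂ → ℝ)
    (hx0 : x 0 = 0) (hu0 : u 0 = 0) (hξ0 : ξ 0 = ξ₀) (hμ0 : μ 0 = μ₀)
    (hHamx : ∀ (t : ℝ) (i : Fin d₁), HasDerivAt (fun s => x s i)
      (deriv (fun a => quadHam J (x t) (u t) (update (ξ t) i a) (μ t)) (ξ t i)) t)
    (hHamu : ∀ (t : ℝ) (j : Fin d₂), HasDerivAt (fun s => u s j)
      (deriv (fun a => quadHam J (x t) (u t) (ξ t) (update (μ t) j a)) (μ t j)) t)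
    (hHamξ : ∀ (t : ℝ) (i : Fin d₁), HasDerivAt (fun s => ξ s i)
      (-(deriv (fun a => quadHam J (update (x t) i a) (u t) (ξ t) (μ t)) (x t i))) t)
    (hHamμ : ∀ (t : ℝ) (j : Fin d₂), HasDerivAt (fun s => μ s j)
      (-(deriv (fun a => quadHam J (x t) (update (u t) j a) (ξ t) (μ t)) (u t j))) t) :
    ∀ t : ℝ,
      μ t = μ₀ ∧
      x t = (expmOneDiv t (J μ₀)).mulVec ξ₀ ∧
      ξ t = (1 / 2 : ℝ) • ((1 + matExp t (J μ₀)).mulVec ξ₀) ∧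
      u t = (1 / 2 : ℝ) • ∫ τ in (0:ℝ)..t,
        bracket J ((expmOneDiv τ (J μ₀)).mulVec ξ₀) ((matExp τ (J μ₀)).mulVec ξ₀) := by
  have hμ : ∀ t, μ t = μ₀ := congrFun <| eq_of_hasDerivAt_eq
    (fun t => hasDerivAt_pi.2 fun j => by simpa [deriv_quadHam_update_u] using hHamμ t j)
    (fun _ => hasDerivAt_const _ μ₀) hμ0
  set A := J μ₀
  set ζ := fun s => horizontalSymbol J (x s) (ξ s) μ₀
  have hx' : ∀ t, HasDerivAt x (ζ t) t := fun t => hasDerivAt_pi.2 fun i => by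
    simpa only [hμ t, deriv_quadHam_update_ξ] using hHamx t i
  have hξ' : ∀ t, HasDerivAt ξ ((1 / 2 : ℝ) • A *ᵥ ζ t) t := fun t => hasDerivAt_pi.2 fun i => by
    simpa only [hμ t, deriv_quadHam_update_x J _ _ _ _ (hskew μ₀), neg_neg] using hHamξ t i
  have hu' : ∀ t, HasDerivAt u ((1 / 2 : ℝ) • bracket J (x t) (ζ t)) t :=
    fun t => hasDerivAt_pi.2 fun j => by
      simpa only [hμ t, deriv_quadHam_update_μ] using hHamu t j
  have hζ' : ∀ t, HasDerivAt ζ (A *ᵥ ζ t) t := fun t => by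
    convert (hx' t).horizontalSymbol J (hξ' t) μ₀ using 1
    module
  have hζ : ∀ t, ζ t = matExp t A *ᵥ ξ₀ := fun t => by
    rw [eq_matExp_mulVec_of_hasDerivAt hζ' t]
    simp [ζ, horizontalSymbol, hx0, hξ0]
  have hx : ∀ t, x t = expmOneDiv t A *ᵥ ξ₀ :=
    eq_expmOneDiv_mulVec_of_hasDerivAt (fun t => hζ t ▸ hx' t) hx0
  intro t
  refine ⟨hμ t, hx t, ?_, ?_⟩
  · have hξζ : ξ t = ζ t - (1 / 2 : ℝ) • A *ᵥ x t := (add_sub_cancel_right _ _).symm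
    rw [hξζ, hζ t, hx t, mulVec_mulVec, mul_expmOneDiv, sub_mulVec, add_mulVec, one_mulVec]
    module
  · rw [← intervalIntegral.integral_smul]
    refine eq_intervalIntegral_of_hasDerivAt (fun τ => hx τ ▸ hζ τ ▸ hu' τ) ?_ hu0 t
    exact (continuous_bracket J (continuous_expmOneDiv_mulVec A ξ₀)
      (continuous_matExp_mulVec A ξ₀)).const_smul (1 / 2 : ℝ)
end

section
/- Let J be a real skew-symmetric d₁×d₁ matrix with |J| := (-J²)^{1/2}, let ξ ∈ ℝ^{d₁} with ξ ≠ 0 and ξ̄ := ξ/|ξ|, and let θ ∈ ℝ. Define Φ₀ := exp(θJ) exp(-iθ|J|)(I + iθ(|J| + iJ) ξ̄ ξ̄ᵀ). Then det Φ₀ = exp(-iθ tr|J|)(1 + iθ⟨|J|ξ̄, ξ̄⟩), and in particular Φ₀ is invertible (since ⟨|J|ξ̄,ξ̄⟩ ≥ 0 is real). -/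
/-!
The determinant is multiplicative, so the three factors are treated separately. For a matrix
diagonalised by a unitary, in particular for a complex multiple of a Hermitian matrix,
`det (exp A) = exp (tr A)`. Writing `θ J = (-iθ) (i J)` with `i J` Hermitian and traceless gives
`det (exp (θ J)) = 1`, and `|J|` is real symmetric, so `det (exp (-iθ |J|)) = exp (-iθ tr |J|)`.
The last factor is a rank-one perturbation of the identity, whose determinant is
`1 + iθ ξ̄ᵀ (|J| + i J) ξ̄ = 1 + iθ ⟨|J| ξ̄, ξ̄⟩` since `⟨J ξ̄, ξ̄⟩ = 0`; it has real part `1`.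
-/

open Matrix

/-- The exponential of a complex matrix, via its power series. -/
noncomputable def matExpC {n : ℕ} (A : Matrix (Fin n) (Fin n) ℂ) : Matrix (Fin n) (Fin n) ℂ :=
  ∑' k : ℕ, ((k.factorial : ℂ))⁻¹ • A ^ k

lemma matExpC_eq_exp {n : ℕ} (A : Matrix (Fin n) (Fin n) ℂ) : matExpC A = NormedSpace.exp A := by
  simp only [matExpC, NormedSpace.exp_eq_tsum (𝕂 := ℂ)]

namespace Matrix

variable {m : Type*} [Fintype m]

lemma det_one_add_vecMulVec [DecidableEq m] {α : Type*} [CommRing α] (u v : m → α) :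
    det (1 + vecMulVec u v) = 1 + v ⬝ᵥ u := by
  rw [vecMulVec_eq Unit, det_one_add_replicateCol_mul_replicateRow]

lemma dotProduct_mulVec_self_eq_zero_of_transpose_eq_neg {R : Type*} [CommRing R]
    [IsAddTorsionFree R] {A : Matrix m m R} (hA : Aᵀ = -A) (v : m → R) : v ⬝ᵥ (A *ᵥ v) = 0 := by
  refine self_eq_neg.mp ?_
  calc v ⬝ᵥ (A *ᵥ v) = (Aᵀ *ᵥ v) ⬝ᵥ v := by rw [mulVec_transpose, dotProduct_mulVec]
    _ = -(v ⬝ᵥ (A *ᵥ v)) := by rw [hA, neg_mulVec, neg_dotProduct, dotProduct_comm]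

lemma trace_eq_zero_of_transpose_eq_neg {R : Type*} [AddCommGroup R] [IsAddTorsionFree R]
    {A : Matrix m m R} (hA : Aᵀ = -A) : A.trace = 0 :=
  self_eq_neg.mp (by rw [← trace_neg, ← hA, trace_transpose])

lemma det_exp_eq_exp_trace_of_eq_conj_diagonal [DecidableEq m] {A U : Matrix m m ℂ}
    (hU : IsUnit U) (v : m → ℂ) (hA : A = U * diagonal v * U⁻¹) :
    (NormedSpace.exp A).det = Complex.exp A.trace := by
  have hexp : NormedSpace.exp v = fun i => Complex.exp (v i) := by
    funext i
    rw [Pi.exp_def, Complex.exp_eq_exp_ℂ]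
  rw [hA, exp_conj _ _ hU, det_conj hU, trace_conj hU, exp_diagonal, det_diagonal, trace_diagonal,
    hexp, Complex.exp_sum]

lemma IsHermitian.det_exp_smul [DecidableEq m] {A : Matrix m m ℂ} (hA : A.IsHermitian) (c : ℂ) :
    (NormedSpace.exp (c • A)).det = Complex.exp (c * A.trace) := by
  set U : Matrix m m ℂ := (hA.eigenvectorUnitary : Matrix m m ℂ)
  have hU : star U * U = 1 := mem_unitaryGroup_iff'.mp hA.eigenvectorUnitary.2
  have hUinv : U⁻¹ = star U := inv_eq_left_inv hU
  have hcA : c • A = U * diagonal (c • (RCLike.ofReal ∘ hA.eigenvalues)) * U⁻¹ := by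
    conv_lhs => rw [hA.spectral_theorem]
    rw [Unitary.conjStarAlgAut_apply, hUinv, diagonal_smul, mul_smul_comm, smul_mul_assoc]
  rw [det_exp_eq_exp_trace_of_eq_conj_diagonal (.of_mul_eq_one_right _ hU) _ hcA, trace_smul,
    smul_eq_mul]

end Matrix

section OfReal

open Complex

lemma Matrix.IsHermitian.map_ofReal {m : Type*} {K : Matrix m m ℝ} (hK : K.IsHermitian) :
    (K.map (fun a => (a : ℂ))).IsHermitian :=
  hK.map _ fun a => (conj_ofReal a).symm

lemma Matrix.isHermitian_I_smul_map_ofReal {m : Type*} {J : Matrix m m ℝ} (hJ : Jᵀ = -J) :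
    (I • J.map (fun a => (a : ℂ))).IsHermitian := by
  rw [IsHermitian, conjTranspose_smul, ← conjTranspose_map _ fun a => (conj_ofReal a).symm,
    conjTranspose_eq_transpose_of_trivial, hJ, Matrix.map_neg _ ofReal_neg, smul_neg, star_def,
    conj_I, neg_smul, neg_neg]

variable {m : Type*} [Fintype m]

lemma Matrix.trace_map_ofReal (A : Matrix m m ℝ) :
    (A.map (fun a => (a : ℂ))).trace = A.trace :=
  (AddMonoidHom.map_trace ofRealHom A).symm

lemma Matrix.dotProduct_map_ofReal_mulVec (A : Matrix m m ℝ) (v : m → ℝ) :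
    (fun i => (v i : ℂ)) ⬝ᵥ (A.map (fun a => (a : ℂ)) *ᵥ fun i => (v i : ℂ)) =
      ((A *ᵥ v ⬝ᵥ v : ℝ) : ℂ) := by
  rw [dotProduct_comm]
  simp only [mulVec, dotProduct, map_apply, ofReal_sum, ofReal_mul]

lemma Matrix.dotProduct_map_ofReal_add_I_smul_mulVec {K J : Matrix m m ℝ} (hJ : Jᵀ = -J)
    (v : m → ℝ) :
    (fun i => (v i : ℂ)) ⬝ᵥ ((K.map (fun a => (a : ℂ)) + I • J.map (fun a => (a : ℂ))) *ᵥ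
        fun i => (v i : ℂ)) = ((K *ᵥ v ⬝ᵥ v : ℝ) : ℂ) := by
  rw [add_mulVec, smul_mulVec, dotProduct_add, dotProduct_smul, dotProduct_map_ofReal_mulVec,
    dotProduct_map_ofReal_mulVec, dotProduct_comm (J *ᵥ v),
    dotProduct_mulVec_self_eq_zero_of_transpose_eq_neg hJ, ofReal_zero, smul_zero, add_zero]

lemma Matrix.det_exp_smul_map_ofReal_of_isHermitian [DecidableEq m] {K : Matrix m m ℝ}
    (hK : K.IsHermitian) (c : ℂ) :
    (NormedSpace.exp (c • K.map (fun a => (a : ℂ)))).det = Complex.exp (c * K.trace) := by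
  rw [hK.map_ofReal.det_exp_smul, trace_map_ofReal]

lemma Matrix.det_exp_smul_map_ofReal_of_transpose_eq_neg [DecidableEq m] {J : Matrix m m ℝ}
    (hJ : Jᵀ = -J) (c : ℂ) : (NormedSpace.exp (c • J.map (fun a => (a : ℂ)))).det = 1 := by
  have hc : c • J.map (fun a => (a : ℂ)) = (-(I * c)) • (I • J.map (fun a => (a : ℂ))) := by
    rw [smul_smul, neg_mul, mul_comm I c, mul_assoc, I_mul_I, mul_neg_one, neg_neg]
  rw [hc, (isHermitian_I_smul_map_ofReal hJ).det_exp_smul, trace_smul, trace_map_ofReal,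
    trace_eq_zero_of_transpose_eq_neg hJ, ofReal_zero, smul_zero, mul_zero, Complex.exp_zero]

lemma Complex.one_add_I_mul_ofReal_ne_zero (x : ℝ) : 1 + I * x ≠ 0 := by
  intro h
  simpa using congrArg re h

end OfReal

theorem statement10_general {d₁ : ℕ} (J K : Matrix (Fin d₁) (Fin d₁) ℝ)
    (hJ : Jᵀ = -J) (hK : K.PosSemidef)
    (ξ : Fin d₁ → ℝ) (θ : ℝ) :
    let ξb : Fin d₁ → ℝ := (Real.sqrt (ξ ⬝ᵥ ξ))⁻¹ • ξ
    let Jc : Matrix (Fin d₁) (Fin d₁) ℂ := J.map (fun a => (a : ℂ))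
    let Kc : Matrix (Fin d₁) (Fin d₁) ℂ := K.map (fun a => (a : ℂ))
    let ξbc : Fin d₁ → ℂ := fun i => (ξb i : ℂ)
    let Φ₀ : Matrix (Fin d₁) (Fin d₁) ℂ :=
      matExpC ((θ : ℂ) • Jc) * matExpC (-((Complex.I * (θ : ℂ)) • Kc)) *
        (1 + (Complex.I * (θ : ℂ)) • vecMulVec ((Kc + Complex.I • Jc).mulVec ξbc) ξbc)
    Φ₀.det = Complex.exp (-(Complex.I * (θ : ℂ) * (K.trace : ℝ))) *
        (1 + Complex.I * (θ : ℂ) * ((K.mulVec ξb ⬝ᵥ ξb : ℝ) : ℂ)) ∧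
      IsUnit Φ₀ := by
  intro ξb Jc Kc ξbc Φ₀
  have hdet : Φ₀.det = Complex.exp (-(Complex.I * (θ : ℂ) * (K.trace : ℝ))) *
      (1 + Complex.I * (θ : ℂ) * ((K.mulVec ξb ⬝ᵥ ξb : ℝ) : ℂ)) := by
    rw [det_mul, det_mul, matExpC_eq_exp, matExpC_eq_exp,
      det_exp_smul_map_ofReal_of_transpose_eq_neg hJ, ← neg_smul,
      det_exp_smul_map_ofReal_of_isHermitian hK.isHermitian, ← smul_vecMulVec,
      det_one_add_vecMulVec, dotProduct_smul, dotProduct_map_ofReal_add_I_smul_mulVec hJ,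
      one_mul, neg_mul, smul_eq_mul, mul_assoc]
  refine ⟨hdet, (isUnit_iff_isUnit_det _).mpr ?_⟩
  rw [hdet]
  refine (Complex.exp_ne_zero _).isUnit.mul (Ne.isUnit ?_)
  simpa only [Complex.ofReal_mul, mul_assoc] using
    Complex.one_add_I_mul_ofReal_ne_zero (θ * (K *ᵥ ξb ⬝ᵥ ξb))

/-- Let `J` be a real skew-symmetric `d₁ × d₁` matrix with
`|J| = K` the positive semidefinite square root of `-J²`, let `ξ ∈ ℝ^{d₁}` be nonzero
with `ξ̄ = ξ/|ξ|` (Euclidean normalisation) and `θ ∈ ℝ`.  With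
`Φ₀ = exp(θJ) exp(-iθ|J|) (I + iθ (|J| + iJ) ξ̄ ξ̄ᵀ)` one has
`det Φ₀ = exp(-iθ tr |J|) (1 + iθ ⟨|J|ξ̄, ξ̄⟩)`; in particular `Φ₀` is invertible. -/
theorem statement10 {d₁ : ℕ} (J K : Matrix (Fin d₁) (Fin d₁) ℝ)
    (hJ : Jᵀ = -J) (hK : K.PosSemidef) (hK2 : K * K = -(J * J))
    (ξ : Fin d₁ → ℝ) (hξ : ξ ≠ 0) (θ : ℝ) :
    let ξb : Fin d₁ → ℝ := (Real.sqrt (ξ ⬝ᵥ ξ))⁻¹ • ξ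
    let Jc : Matrix (Fin d₁) (Fin d₁) ℂ := J.map (fun a => (a : ℂ))
    let Kc : Matrix (Fin d₁) (Fin d₁) ℂ := K.map (fun a => (a : ℂ))
    let ξbc : Fin d₁ → ℂ := fun i => (ξb i : ℂ)
    let Φ₀ : Matrix (Fin d₁) (Fin d₁) ℂ :=
      matExpC ((θ : ℂ) • Jc) * matExpC (-((Complex.I * (θ : ℂ)) • Kc)) *
        (1 + (Complex.I * (θ : ℂ)) • vecMulVec ((Kc + Complex.I • Jc).mulVec ξbc) ξbc)
    Φ₀.det = Complex.exp (-(Complex.I * (θ : ℂ) * (K.trace : ℝ))) *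
        (1 + Complex.I * (θ : ℂ) * ((K.mulVec ξb ⬝ᵥ ξb : ℝ) : ℂ)) ∧
      IsUnit Φ₀ :=
  statement10_general J K hJ hK ξ θ
end
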